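/- arXiv:2105.03374 — 3 statements merged into one kernel-verified Lean document; each statement's English description precedes it below -/
import Mathlib

section
/- Let ts : ℕ → ℝ be the reference timestamps of the microticks of a local physical clock that is a good clock with granularity g > 0 and maximum drift rate r_max ≥ 0. Let a virtual clock be given by a virtual microtick function ν : ℕ → ℕ and a timestamp function tsv : ℕ → ℝ with the same granularity g, and suppose there is l₀ ∈ ℕ such that for all l ≥ l₀ the succession property ν(l+1) = ν(l) + 1 and the simultaneity property tsv(ν(l)) = ts(l) hold. Then the virtual clock is a good clock from microtick ν(l₀) onward: for every m ≥ ν(l₀), 1 - r_max ≤ |tsv(m+1) - tsv(m)| / g ≤ 1 + r_max. -/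
/-- If a virtual clock fulfills the succession and simultaneity
properties (from some `l₀`) with respect to a good physical clock with
granularity `g` and maximum drift rate `r_max`, then the virtual clock is a
good clock from microtick `ν l₀` onward. -/
theorem virtual_clock_condition
    (ts : ℕ → ℝ) (g r_max : ℝ) (hg : 0 < g) (hr : 0 ≤ r_max)
    (hgood : ∀ l : ℕ, 1 - r_max ≤ |ts (l + 1) - ts l| / g ∧
                      |ts (l + 1) - ts l| / g ≤ 1 + r_max)
    (ν : ℕ → ℕ) (tsv : ℕ → ℝ) (l₀ : ℕ)
    (hsucc : ∀ l, l₀ ≤ l → ν (l + 1) = ν l + 1)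
    (hsim : ∀ l, l₀ ≤ l → tsv (ν l) = ts l) :
    ∀ m : ℕ, ν l₀ ≤ m →
      1 - r_max ≤ |tsv (m + 1) - tsv m| / g ∧
      |tsv (m + 1) - tsv m| / g ≤ 1 + r_max := by
  have hnu : ∀ k : ℕ, ν (l₀ + k) = ν l₀ + k := by
    intro k
    induction k with
    | zero => simp
    | succ n ih =>
      rw [← Nat.add_assoc, hsucc _ (Nat.le_add_right _ _), ih]
      ring
  intro m hm
  set l := l₀ + (m - ν l₀) with hl
  have hl0 : l₀ ≤ l := Nat.le_add_right _ _
  have hνl : ν l = m := by rw [hl, hnu, Nat.add_sub_cancel' hm]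
  have h1 : tsv m = ts l := hνl ▸ hsim l hl0
  have h2 : tsv (m + 1) = ts (l + 1) := by
    have := hsim (l + 1) (le_trans hl0 (Nat.le_succ _))
    rwa [hsucc l hl0, hνl] at this
  rw [h1, h2]
  exact hgood l
end

section
/- Let ts₁, ts₂ : ℕ → ℝ be two nondecreasing good clocks, both with granularity g > 0 and maximum drift rate r_max ≥ 0. Then for all l, n ∈ ℕ, |ts₁(l + n) - ts₂(l + n)| ≤ |ts₁(l) - ts₂(l)| + 2·n·r_max·g; i.e., two free-running good clocks that agree up to some offset at a synchronization instant drift apart by at most the drift offset Γ = 2·r_max·S·g over a resynchronization period of S microticks. -/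
/-- Two nondecreasing free-running good clocks with the same
granularity `g` and maximum drift rate `r_max` drift apart by at most
`2·n·r_max·g` over `n` microticks. -/
theorem good_clocks_drift_offset_bound
    (ts₁ ts₂ : ℕ → ℝ) (g r_max : ℝ) (hg : 0 < g) (hr : 0 ≤ r_max)
    (hmono₁ : Monotone ts₁) (hmono₂ : Monotone ts₂)
    (hgood₁ : ∀ l : ℕ, 1 - r_max ≤ |ts₁ (l + 1) - ts₁ l| / g ∧
                       |ts₁ (l + 1) - ts₁ l| / g ≤ 1 + r_max)
    (hgood₂ : ∀ l : ℕ, 1 - r_max ≤ |ts₂ (l + 1) - ts₂ l| / g ∧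
                       |ts₂ (l + 1) - ts₂ l| / g ≤ 1 + r_max) :
    ∀ l n : ℕ, |ts₁ (l + n) - ts₂ (l + n)| ≤
      |ts₁ l - ts₂ l| + 2 * (n : ℝ) * r_max * g := by
  intro l n
  induction n with
  | zero => simp
  | succ n ih =>
    set m := l + n with hm
    have h1 := hgood₁ m
    have h2 := hgood₂ m
    have ha1 : |ts₁ (m + 1) - ts₁ m| = ts₁ (m + 1) - ts₁ m := by
      rw [abs_of_nonneg]; linarith [hmono₁ (Nat.le_succ m)]
    have ha2 : |ts₂ (m + 1) - ts₂ m| = ts₂ (m + 1) - ts₂ m := by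
      rw [abs_of_nonneg]; linarith [hmono₂ (Nat.le_succ m)]
    rw [ha1] at h1
    rw [ha2] at h2
    have hd1 : (1 - r_max) * g ≤ ts₁ (m + 1) - ts₁ m ∧
        ts₁ (m + 1) - ts₁ m ≤ (1 + r_max) * g := by
      constructor
      · exact (le_div_iff₀ hg).mp h1.1
      · exact (div_le_iff₀ hg).mp h1.2
    have hd2 : (1 - r_max) * g ≤ ts₂ (m + 1) - ts₂ m ∧
        ts₂ (m + 1) - ts₂ m ≤ (1 + r_max) * g := by
      constructor
      · exact (le_div_iff₀ hg).mp h2.1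
      · exact (div_le_iff₀ hg).mp h2.2
    have key : |ts₁ (m + 1) - ts₂ (m + 1)| ≤ |ts₁ m - ts₂ m| + 2 * r_max * g := by
      rw [abs_le]
      rcases abs_le.mp (le_refl |ts₁ m - ts₂ m|) with ⟨hl, hu⟩
      constructor <;> nlinarith [hd1.1, hd1.2, hd2.1, hd2.2]
    have : l + (n + 1) = m + 1 := by omega
    rw [this]
    push_cast
    calc |ts₁ (m + 1) - ts₂ (m + 1)| ≤ |ts₁ m - ts₂ m| + 2 * r_max * g := key
      _ ≤ |ts₁ l - ts₂ l| + 2 * (n : ℝ) * r_max * g + 2 * r_max * g := by linarith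
      _ = |ts₁ l - ts₂ l| + 2 * ((n : ℝ) + 1) * r_max * g := by ring
end

section
/- Let C₁, C₂ : ℝ → ℝ be the readings of two synchronized clocks as functions of reference time, satisfying |C₁(t) - C₂(t)| ≤ Π for all t ∈ ℝ (clock synchronization precision Π), and suppose C₂ is Lipschitz with constant 1 + r_max (its rate deviates from real time by at most the maximum drift rate r_max ≥ 0). Suppose a measurement packet is broadcast at reference time t and is timestamped by the two clocks at reference times t + a₁ and t + a₂ respectively, where the path delays satisfy d_min ≤ a₁ ≤ d_max and d_min ≤ a₂ ≤ d_max. Then the measured offset satisfies |C₁(t + a₁) - C₂(t + a₂)| ≤ Π + (1 + r_max)·(d_max - d_min); i.e., the measured clock synchronization precision Π* exceeds the actual precision Π by at most (1 + r_max) times the inherent measurement error γ = d_max - d_min. -/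
/-- The measured clock synchronization precision exceeds the
actual precision `Π` by at most `(1 + r_max)` times the inherent measurement
error `γ = d_max - d_min`. -/
theorem measured_precision_bound
    (C₁ C₂ : ℝ → ℝ) (Pi r_max : ℝ) (hr : 0 ≤ r_max)
    (hprec : ∀ t : ℝ, |C₁ t - C₂ t| ≤ Pi)
    (hlip : LipschitzWith (Real.toNNReal (1 + r_max)) C₂)
    (t a₁ a₂ dmin dmax : ℝ)
    (h1 : dmin ≤ a₁) (h2 : a₁ ≤ dmax) (h3 : dmin ≤ a₂) (h4 : a₂ ≤ dmax) :
    |C₁ (t + a₁) - C₂ (t + a₂)| ≤ Pi + (1 + r_max) * (dmax - dmin) := by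
  have hd := hlip.dist_le_mul (t + a₁) (t + a₂)
  rw [Real.dist_eq, Real.dist_eq] at hd
  have hcoe : ((Real.toNNReal (1 + r_max)) : ℝ) = 1 + r_max :=
    Real.coe_toNNReal _ (by linarith)
  rw [hcoe] at hd
  have habs : |t + a₁ - (t + a₂)| ≤ dmax - dmin := by
    rw [abs_le]; constructor <;> linarith
  have h1r : (0:ℝ) ≤ 1 + r_max := by linarith
  have hd2 : |C₂ (t + a₁) - C₂ (t + a₂)| ≤ (1 + r_max) * (dmax - dmin) :=
    hd.trans (by nlinarith)
  calc |C₁ (t + a₁) - C₂ (t + a₂)|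
      ≤ |C₁ (t + a₁) - C₂ (t + a₁)| + |C₂ (t + a₁) - C₂ (t + a₂)| :=
        abs_sub_le _ _ _
    _ ≤ Pi + (1 + r_max) * (dmax - dmin) := add_le_add (hprec _) hd2
end
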